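/- arXiv:2412.14994 — 3 statements merged into one kernel-verified Lean document; each statement's English description precedes it below -/
import Mathlib

section
/- Let (X,d,μ) be a space of homogeneous type, 0 < p < 1 ≤ q ≤ ∞. If {a_j} is a sequence of (p,q,T)-approximate atoms and {λ_j} ⊂ ℂ with Σ_j |λ_j|^p < ∞, then the series Σ_j λ_j a_j converges in the dual norm of ℓ_{1/p−1,T}(X) to a continuous linear functional g on ℓ_{1/p−1,T}(X) satisfying ‖g‖_{ℓ*_{1/p−1,T}} ≤ 2 (Σ_j |λ_j|^p)^{1/p}. -/
open MeasureTheory ENNReal Filter Topology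

noncomputable section

variable {X : Type*}

/-- Quasi-metric ball. -/
def hball (d : X → X → ℝ) (x : X) (r : ℝ) : Set X := {y | d x y < r}

/-- `(X,d,μ)` is a space of homogeneous type with quasi-triangle constant `A₀`,
doubling constant `A'` and upper dimension `γ`. -/
structure IsHomType [MeasurableSpace X] (d : X → X → ℝ) (μ : Measure X)
    (A₀ A' γ : ℝ) : Prop where
  A0_ge : 1 ≤ A₀
  A'_pos : 0 < A'
  gamma_pos : 0 < γ
  nonneg : ∀ x y, 0 ≤ d x y
  eq_zero : ∀ x y, d x y = 0 ↔ x = y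
  symm : ∀ x y, d x y = d y x
  tri : ∀ x y z, d x y ≤ A₀ * (d x z + d z y)
  meas : ∀ x r, MeasurableSet (hball d x r)
  pos : ∀ x r, 0 < r → 0 < μ (hball d x r)
  fin : ∀ x r, μ (hball d x r) < ⊤
  doubling : ∀ x r lam, 1 ≤ lam →
    μ (hball d x (lam * r)) ≤ ENNReal.ofReal (A' * lam ^ γ) * μ (hball d x r)

/-- `L` is an upper bound for all the local Lipschitz functionals `𝔑^B_{α,T}(φ)`,
i.e. an upper bound for the `ℓ_{α,T}` norm of `φ`. -/
def LipBound [MeasurableSpace X] (d : X → X → ℝ) (μ : Measure X) (α T : ℝ)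
    (φ : X → ℝ) (L : ℝ) : Prop :=
  ∀ x r, 0 < r →
    (r < T → ∀ y ∈ hball d x r, ∀ z ∈ hball d x r,
      |φ y - φ z| ≤ L * (μ (hball d x r)).toReal ^ α) ∧
    (T ≤ r → ∀ y ∈ hball d x r, |φ y| ≤ L * (μ (hball d x r)).toReal ^ α)

/-- A `(p,q,T)`-approximate atom. -/
def IsApproxAtom [MeasurableSpace X] (d : X → X → ℝ) (μ : Measure X)
    (p : ℝ) (q : ℝ≥0∞) (T : ℝ) (a : X → ℝ) : Prop :=
  ∃ (x_B : X) (r_B : ℝ), 0 < r_B ∧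
    (∀ x, a x ≠ 0 → x ∈ hball d x_B r_B) ∧
    eLpNorm a q μ ≤ μ (hball d x_B r_B) ^ (1/q.toReal - 1/p) ∧
    Integrable a μ ∧
    |∫ x, a x ∂μ| ≤ (μ (hball d x_B T)).toReal ^ (1 - 1/p)

/-!
Each atom pairs with `φ` to at most `2L`. Hölder on the supporting ball `B` gives
`‖a‖₁ ≤ |B|^{1-1/p}`. If `r_B ≥ T`, then `|φ| ≤ L|B|^{1/p-1}` on `B` and the pairing is at most `L`.
If `r_B < T`, split `φ = (φ - φ(x_B)) + φ(x_B)`: the oscillation of `φ` on `B` handles the first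
part, and `|φ(x_B)| ≤ L|B(x_B,T)|^{1/p-1}` together with `|∫ a| ≤ |B(x_B,T)|^{1-1/p}` the second.
Since `p ≤ 1`, `∑ |λ_j| ≤ (∑ |λ_j|^p)^{1/p}`, so the series converges absolutely with the stated bound.
-/

section Analysis

variable {α : Type*} [MeasurableSpace α] {μ : Measure α}

theorem eLpNorm_le_eLpNorm_mul_rpow_measure_of_support_subset {f : α → ℝ} {s : Set α}
    {r q : ℝ≥0∞} (hrq : r ≤ q) (hf : AEStronglyMeasurable f μ) (hfs : Function.support f ⊆ s) :
    eLpNorm f r μ ≤ eLpNorm f q μ * μ s ^ (1 / r.toReal - 1 / q.toReal) := by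
  simpa only [eLpNorm_restrict_eq_of_support_subset hfs, Measure.restrict_apply_univ] using
    eLpNorm_le_eLpNorm_mul_rpow_measure_univ hrq (hf.restrict (s := s))

theorem integral_abs_le_rpow_of_eLpNorm_le {f : α → ℝ} {s : Set α} {p : ℝ} {q : ℝ≥0∞}
    (hq : 1 ≤ q) (hs0 : μ s ≠ 0) (hs : μ s ≠ ⊤) (hf : AEStronglyMeasurable f μ)
    (hfs : Function.support f ⊆ s) (hfq : eLpNorm f q μ ≤ μ s ^ (1 / q.toReal - 1 / p)) :
    ∫ x, |f x| ∂μ ≤ (μ s).toReal ^ (1 - 1 / p) := by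
  have hL1 : eLpNorm f 1 μ ≤ μ s ^ (1 - 1 / p) :=
    calc eLpNorm f 1 μ ≤ eLpNorm f q μ * μ s ^ (1 - 1 / q.toReal) := by
          simpa using eLpNorm_le_eLpNorm_mul_rpow_measure_of_support_subset hq hf hfs
      _ ≤ μ s ^ (1 / q.toReal - 1 / p) * μ s ^ (1 - 1 / q.toReal) := by gcongr
      _ = μ s ^ (1 - 1 / p) := by rw [← ENNReal.rpow_add _ _ hs0 hs]; ring_nf
  have hint : ∫ x, |f x| ∂μ = (eLpNorm f 1 μ).toReal := by
    simp only [eLpNorm_one_eq_lintegral_enorm, ← integral_norm_eq_lintegral_enorm hf,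
      Real.norm_eq_abs]
  rw [hint, ENNReal.toReal_rpow]
  exact ENNReal.toReal_mono (ENNReal.rpow_ne_top_of_ne_zero hs0 hs) hL1

theorem abs_integral_mul_le_mul_integral_abs {f g : α → ℝ} {K : ℝ}
    (hfg : Integrable (fun x => f x * g x) μ) (hf : Integrable f μ)
    (hg : ∀ x, f x ≠ 0 → |g x| ≤ K) :
    |∫ x, f x * g x ∂μ| ≤ K * ∫ x, |f x| ∂μ := by
  have hpt : ∀ x, |f x * g x| ≤ K * |f x| := by
    intro x
    by_cases hx : f x = 0
    · simp [hx]
    · rw [abs_mul, mul_comm K]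
      exact mul_le_mul_of_nonneg_left (hg x hx) (abs_nonneg _)
  calc |∫ x, f x * g x ∂μ| ≤ ∫ x, |f x * g x| ∂μ := abs_integral_le_integral_abs
    _ ≤ ∫ x, K * |f x| ∂μ := integral_mono hfg.abs (hf.abs.const_mul K) hpt
    _ = K * ∫ x, |f x| ∂μ := integral_const_mul K _

end Analysis

theorem mul_rpow_mul_le_of_le_rpow_neg {m I L s : ℝ} (hm : 0 < m) (hL : 0 ≤ L)
    (hI : I ≤ m ^ (-s)) : L * m ^ s * I ≤ L :=
  calc L * m ^ s * I ≤ L * m ^ s * m ^ (-s) := by gcongr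
    _ = L := by rw [mul_assoc, ← Real.rpow_add hm, add_neg_cancel, Real.rpow_zero, mul_one]

theorem abs_le_rpow_mul_tsum_rpow {ι : Type*} {lam : ι → ℝ} {p : ℝ} (hp : 0 < p) (hp1 : p ≤ 1)
    (hlam : Summable fun j => |lam j| ^ p) (j : ι) :
    |lam j| ≤ |lam j| ^ p * (∑' i, |lam i| ^ p) ^ (1 / p - 1) := by
  have hle : |lam j| ^ p ≤ ∑' i, |lam i| ^ p :=
    hlam.le_tsum j fun i _ => Real.rpow_nonneg (abs_nonneg _) p
  calc |lam j| = |lam j| ^ p * (|lam j| ^ p) ^ (1 / p - 1) := by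
        rw [← Real.rpow_mul (abs_nonneg _), ← Real.rpow_add' (abs_nonneg _) (by field_simp; simp)]
        field_simp; simp
    _ ≤ |lam j| ^ p * (∑' i, |lam i| ^ p) ^ (1 / p - 1) := by
        gcongr
        exact sub_nonneg.mpr (one_le_one_div hp hp1)

theorem summable_abs_and_tsum_abs_le_rpow {ι : Type*} {lam : ι → ℝ} {p : ℝ} (hp : 0 < p)
    (hp1 : p ≤ 1) (hlam : Summable fun j => |lam j| ^ p) :
    Summable (fun j => |lam j|) ∧ ∑' j, |lam j| ≤ (∑' j, |lam j| ^ p) ^ (1 / p) := by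
  set M := ∑' j, |lam j| ^ p
  have hdom := abs_le_rpow_mul_tsum_rpow hp hp1 hlam
  have hsum : Summable fun j => |lam j| ^ p * M ^ (1 / p - 1) := hlam.mul_right _
  refine ⟨hsum.of_nonneg_of_le (fun j => abs_nonneg _) hdom, ?_⟩
  have hM : 0 ≤ M := tsum_nonneg fun j => Real.rpow_nonneg (abs_nonneg _) p
  calc ∑' j, |lam j| ≤ ∑' j, |lam j| ^ p * M ^ (1 / p - 1) :=
        (hsum.of_nonneg_of_le (fun j => abs_nonneg _) hdom).tsum_le_tsum hdom hsum
    _ = M * M ^ (1 / p - 1) := tsum_mul_right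
    _ = M ^ (1 / p) := by
        rw [mul_comm, ← Real.rpow_add_one' hM (by simp [hp.ne']), sub_add_cancel]

theorem summable_mul_and_abs_tsum_mul_le {ι : Type*} {lam c : ι → ℝ} {C : ℝ}
    (hlam : Summable fun j => |lam j|) (hc : ∀ j, |c j| ≤ C) :
    Summable (fun j => lam j * c j) ∧ |∑' j, lam j * c j| ≤ C * ∑' j, |lam j| := by
  have hbound : ∀ j, ‖lam j * c j‖ ≤ C * |lam j| := fun j => by
    rw [Real.norm_eq_abs, abs_mul, mul_comm C]
    exact mul_le_mul_of_nonneg_left (hc j) (abs_nonneg _)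
  refine ⟨(hlam.mul_left C).of_norm_bounded hbound, ?_⟩
  rw [← tsum_mul_left, ← Real.norm_eq_abs]
  exact tsum_of_norm_bounded (hlam.mul_left C).hasSum hbound

namespace IsHomType

variable [MeasurableSpace X] {d : X → X → ℝ} {μ : Measure X} {A₀ A' γ : ℝ}

theorem mem_hball_self (hX : IsHomType d μ A₀ A' γ) (x : X) {r : ℝ} (hr : 0 < r) :
    x ∈ hball d x r := by
  simpa [hball, (hX.eq_zero x x).mpr rfl] using hr

theorem measure_hball_toReal_pos (hX : IsHomType d μ A₀ A' γ) (x : X) {r : ℝ} (hr : 0 < r) :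
    0 < (μ (hball d x r)).toReal :=
  ENNReal.toReal_pos (hX.pos x r hr).ne' (hX.fin x r).ne

end IsHomType

theorem IsApproxAtom.abs_integral_mul_le [MeasurableSpace X] {d : X → X → ℝ} {μ : Measure X}
    {A₀ A' γ : ℝ} (hX : IsHomType d μ A₀ A' γ) {p : ℝ} {q : ℝ≥0∞} (hq : 1 ≤ q) {T : ℝ}
    (hT : 0 < T) {a φ : X → ℝ} (ha : IsApproxAtom d μ p q T a) {L : ℝ} (hL : 0 ≤ L)
    (hφ : LipBound d μ (1 / p - 1) T φ L) (haφ : Integrable (fun x => a x * φ x) μ) :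
    |∫ x, a x * φ x ∂μ| ≤ 2 * L := by
  obtain ⟨xB, rB, hr, hsupp, hqn, hint, hmean⟩ := ha
  have hB := hX.measure_hball_toReal_pos xB hr
  have habs : ∫ x, |a x| ∂μ ≤ (μ (hball d xB rB)).toReal ^ (-(1 / p - 1)) := by
    rw [neg_sub]
    exact integral_abs_le_rpow_of_eLpNorm_le hq (hX.pos xB rB hr).ne' (hX.fin xB rB).ne
      hint.aestronglyMeasurable hsupp hqn
  rcases lt_or_ge rB T with hrT | hTr
  · set c := φ xB
    have hI : Integrable (fun x => a x * (φ x - c)) μ := by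
      simp only [mul_sub]
      exact haφ.sub (hint.mul_const c)
    have hosc : |∫ x, a x * (φ x - c) ∂μ| ≤ L := by
      refine (abs_integral_mul_le_mul_integral_abs hI hint fun x hx => ?_).trans
        (mul_rpow_mul_le_of_le_rpow_neg hB hL habs)
      exact (hφ xB rB hr).1 hrT x (hsupp x hx) xB (hX.mem_hball_self xB hr)
    have hc : |c * ∫ x, a x ∂μ| ≤ L := by
      rw [abs_mul]
      refine (mul_le_mul_of_nonneg_left hmean (abs_nonneg c)).trans ?_
      refine le_trans ?_ (mul_rpow_mul_le_of_le_rpow_neg (hX.measure_hball_toReal_pos xB hT) hL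
        (s := 1 / p - 1) (by rw [neg_sub]))
      gcongr
      exact (hφ xB T hT).2 le_rfl xB (hX.mem_hball_self xB hT)
    have hsplit : ∫ x, a x * φ x ∂μ = ∫ x, a x * (φ x - c) ∂μ + c * ∫ x, a x ∂μ := by
      simp only [mul_sub]
      rw [integral_sub haφ (hint.mul_const c), integral_mul_const]
      ring
    rw [hsplit, two_mul]
    exact (abs_add_le _ _).trans (add_le_add hosc hc)
  · have hbig : |∫ x, a x * φ x ∂μ| ≤ L :=
      (abs_integral_mul_le_mul_integral_abs haφ hint fun x hx =>
        (hφ xB rB hr).2 hTr x (hsupp x hx)).trans (mul_rpow_mul_le_of_le_rpow_neg hB hL habs)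
    linarith

/-- Series of approximate atoms with `ℓ^p` coefficients converge in the dual of
`ℓ_{1/p-1,T}(X)`, with dual norm at most `2 (Σ|λ_j|^p)^{1/p}`. -/
theorem stmt2 [MeasurableSpace X] (d : X → X → ℝ) (μ : Measure X) (A₀ A' γ : ℝ)
    (hX : IsHomType d μ A₀ A' γ) (p : ℝ) (q : ℝ≥0∞) (hp : 0 < p) (hp1 : p < 1)
    (hq : 1 ≤ q) (T : ℝ) (hT : 0 < T)
    (a : ℕ → X → ℝ) (ha : ∀ j, IsApproxAtom d μ p q T (a j))
    (lam : ℕ → ℝ) (hlam : Summable fun j => |lam j| ^ p)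
    (φ : X → ℝ) (L : ℝ) (hL : 0 ≤ L) (hφ : LipBound d μ (1/p - 1) T φ L)
    (haφ : ∀ j, Integrable (fun x => a j x * φ x) μ) :
    Summable (fun j => lam j * ∫ x, a j x * φ x ∂μ) ∧
      |∑' j, lam j * ∫ x, a j x * φ x ∂μ| ≤
        2 * (∑' j, |lam j| ^ p) ^ (1/p) * L := by
  obtain ⟨hsum, hl1⟩ := summable_abs_and_tsum_abs_le_rpow hp hp1.le hlam
  obtain ⟨hsummable, hbound⟩ := summable_mul_and_abs_tsum_mul_le hsum fun j =>
    (ha j).abs_integral_mul_le hX hq hT hL hφ (haφ j)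
  refine ⟨hsummable, hbound.trans ?_⟩
  calc 2 * L * ∑' j, |lam j| ≤ 2 * L * (∑' j, |lam j| ^ p) ^ (1 / p) := by gcongr
    _ = 2 * (∑' j, |lam j| ^ p) ^ (1 / p) * L := by ring
end
end

section
/- Let (X,d,μ) be a space of homogeneous type with doubling constant A′, 0 < p < 1 ≤ q ≤ ∞, and let a be a (p,q,T)-approximate atom supported in ball B. Then for any f in the local Campanato space c_{1/p−1,q′,T}(X) (q′ the conjugate exponent), |∫ a f dμ| ≤ (1 + (A′)^{2/p} / ((A′)^{1/p−1} − 1)) ‖f‖_{c_{1/p−1,q′,T}}. -/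
open MeasureTheory ENNReal Filter Topology

noncomputable section

variable {X : Type*}

/-- The local mean `m_{B,T}(f)`: the average of `f` over the ball if `r < T`, else `0`. -/
def mloc [MeasurableSpace X] (d : X → X → ℝ) (μ : Measure X) (T : ℝ) (f : X → ℝ)
    (x : X) (r : ℝ) : ℝ :=
  if r < T then ⨍ y in hball d x r, f y ∂μ else 0

/-!
Write `m = m_{B,T}(f)` and split `∫ a f = ∫ a (f - m) + m ∫ a`. Hölder's inequality and the
size condition on `a` bound the first term by `L`: the powers of `|B|` cancel. For the second,
`|∫ a| ≤ |B(x_B,T)|^{-α}`, so it suffices that `|m| ≤ C L |B(x_B,T)|^α`. Since `m_{B(x,T),T} = 0`,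
this follows by chaining local means along radii from `r_B` to `T` whose ball measures shrink by
the factor `A'` at each step. Such radii exist because the ball measure is left-continuous in the
radius and, by the doubling condition with `λ → 1`, jumps by at most the factor `A'`. The
Campanato condition bounds each link of the chain, and the links sum to a geometric series.
-/

lemma hball_mono {d : X → X → ℝ} {x : X} {r s : ℝ} (h : r ≤ s) :
    hball d x r ⊆ hball d x s := fun _ hy => hy.trans_le h

lemma measure_hball_le_of_forall_lt [MeasurableSpace X] {d : X → X → ℝ} {μ : Measure X}
    {x : X} {u : ℝ} {c : ℝ≥0∞} (h : ∀ s < u, μ (hball d x s) ≤ c) :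
    μ (hball d x u) ≤ c := by
  have hmono : Monotone fun n : ℕ => hball d x (u - 1 / (n + 1)) :=
    fun m n hmn => hball_mono (by gcongr)
  have hunion : hball d x u = ⋃ n : ℕ, hball d x (u - 1 / (n + 1)) := by
    ext y
    simp only [hball, Set.mem_ofPred_eq, Set.mem_iUnion]
    refine ⟨fun hy => ?_, fun ⟨n, hn⟩ => hn.trans (by simp; positivity)⟩
    obtain ⟨n, hn⟩ := exists_nat_one_div_lt (sub_pos.2 hy)
    exact ⟨n, by linarith⟩
  rw [hunion, hmono.measure_iUnion]
  exact iSup_le fun n => h _ (by simp; positivity)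

namespace IsHomType

variable [MeasurableSpace X] {d : X → X → ℝ} {μ : Measure X} {A₀ A' γ : ℝ}

lemma measureReal_hball_pos (hX : IsHomType d μ A₀ A' γ) (x : X) {r : ℝ} (hr : 0 < r) :
    0 < μ.real (hball d x r) :=
  ENNReal.toReal_pos (hX.pos x r hr).ne' (hX.fin x r).ne

lemma measureReal_hball_mono (hX : IsHomType d μ A₀ A' γ) (x : X) {r s : ℝ} (h : r ≤ s) :
    μ.real (hball d x r) ≤ μ.real (hball d x s) :=
  measureReal_mono (hball_mono h) (hX.fin x s).ne

lemma measureReal_hball_mul_le (hX : IsHomType d μ A₀ A' γ) (x : X) (r : ℝ) {lam : ℝ}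
    (hlam : 1 ≤ lam) :
    μ.real (hball d x (lam * r)) ≤ A' * lam ^ γ * μ.real (hball d x r) := by
  have h := ENNReal.toReal_mono (by finiteness [hX.fin x r]) (hX.doubling x r lam hlam)
  rwa [ENNReal.toReal_mul, ENNReal.toReal_ofReal (by have := hX.A'_pos; positivity)] at h

/-- `u` is the supremum of the radii whose ball has measure at most `c`; left continuity gives
`μ(B(x,u)) ≤ c`, and doubling with `λ → 1` gives `c ≤ A' μ(B(x,u))`. -/
lemma exists_radius_measureReal_le_le_mul (hX : IsHomType d μ A₀ A' γ) (x : X) {r t c : ℝ}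
    (hr : 0 < r) (hrt : r ≤ t) (hrc : μ.real (hball d x r) ≤ c)
    (hct : c < μ.real (hball d x t)) :
    ∃ u, r ≤ u ∧ u < t ∧ μ.real (hball d x u) ≤ c ∧ c ≤ A' * μ.real (hball d x u) := by
  set V := fun s => μ.real (hball d x s)
  set S := {s | r ≤ s ∧ s ≤ t ∧ V s ≤ c}
  have hrS : r ∈ S := ⟨le_rfl, hrt, hrc⟩
  have hbdd : BddAbove S := ⟨t, fun s hs => hs.2.1⟩
  set u := sSup S
  have hru : r ≤ u := le_csSup hbdd hrS
  have hut : u ≤ t := csSup_le ⟨r, hrS⟩ fun s hs => hs.2.1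
  have hu : 0 < u := hr.trans_le hru
  have hc : 0 ≤ c := measureReal_nonneg.trans hrc
  have hVu : V u ≤ c := by
    refine (ENNReal.le_ofReal_iff_toReal_le (hX.fin x u).ne hc).1
      (measure_hball_le_of_forall_lt fun s hs => ?_)
    obtain ⟨s', hs'S, hss'⟩ := exists_lt_of_lt_csSup ⟨r, hrS⟩ hs
    exact (ENNReal.le_ofReal_iff_toReal_le (hX.fin x s).ne hc).2
      ((hX.measureReal_hball_mono x hss'.le).trans hs'S.2.2)
  have hut' : u < t := hut.lt_of_ne fun h => by rw [h] at hVu; linarith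
  refine ⟨u, hru, hut', hVu, ?_⟩
  by_contra! hlt
  have hVu0 : 0 < V u := hX.measureReal_hball_pos x hu
  have hratio : 1 < c / (A' * V u) := by
    rw [one_lt_div (mul_pos hX.A'_pos hVu0)]; exact hlt
  set lam := (c / (A' * V u)) ^ (1 / γ)
  have hlam : 1 < lam := Real.one_lt_rpow hratio (one_div_pos.2 hX.gamma_pos)
  have hlamγ : lam ^ γ = c / (A' * V u) := by
    rw [← Real.rpow_mul (by positivity), one_div_mul_cancel hX.gamma_pos.ne', Real.rpow_one]
  have hV_lam : V (lam * u) ≤ c := by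
    have := hX.measureReal_hball_mul_le x u hlam.le
    rw [hlamγ] at this
    convert this using 1
    field_simp [hX.A'_pos.ne', hVu0.ne']
    rfl
  have hmin : min (lam * u) t ∈ S :=
    ⟨le_min (hru.trans (le_mul_of_one_le_left hu.le hlam.le)) hrt, min_le_right _ _,
      (hX.measureReal_hball_mono x (min_le_left _ _)).trans hV_lam⟩
  have := le_csSup hbdd hmin
  rcases min_choice (lam * u) t with h | h <;> rw [h] at this
  · nlinarith
  · linarith

end IsHomType

/-- Telescoping along radii whose measures `V` shrink by the factor `A` at each step, `hmid`
providing the next radius; the bound is the geometric series `A² L V(t)^α ∑ₖ A^{-kα}`. -/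
lemma abs_sub_le_of_geometric_chain {V m : ℝ → ℝ} {A α L r : ℝ} (hA : 1 < A) (hα : 0 < α)
    (hL : 0 ≤ L) (hV : ∀ t, r ≤ t → 0 < V t)
    (hstep : ∀ s t, r ≤ s → s ≤ t → |m s - m t| ≤ L * V t ^ (α + 1) / V s)
    (hmid : ∀ t, r ≤ t → A ^ 2 * V r < V t →
      ∃ u, r ≤ u ∧ u ≤ t ∧ V u ≤ V t / A ∧ V t ≤ A ^ 2 * V u)
    {t : ℝ} (hrt : r ≤ t) :
    |m r - m t| ≤ A ^ 2 * A ^ α / (A ^ α - 1) * L * V t ^ α := by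
  have hAα : 1 < A ^ α := Real.one_lt_rpow hA hα
  set K := A ^ 2 * A ^ α / (A ^ α - 1) * L
  have hK : A ^ 2 * L ≤ K := by
    simp only [K, mul_div_assoc]
    exact mul_le_mul_of_nonneg_right
      (le_mul_of_one_le_right (by positivity) ((one_le_div (by linarith)).2 (by linarith))) hL
  have hVα : ∀ t, r ≤ t → 0 ≤ V t ^ α := fun t ht => Real.rpow_nonneg (hV t ht).le α
  have hshort : ∀ s t, r ≤ s → s ≤ t → V t ≤ A ^ 2 * V s →
      |m s - m t| ≤ A ^ 2 * L * V t ^ α := by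
    intro s t hrs hst hts
    have hVs := hV s hrs
    refine (hstep s t hrs hst).trans ?_
    rw [div_le_iff₀ hVs, Real.rpow_add_one (hV t (hrs.trans hst)).ne']
    nlinarith [mul_nonneg (mul_nonneg hL (hVα t (hrs.trans hst))) (sub_nonneg.2 hts)]
  suffices ∀ n : ℕ, ∀ t, r ≤ t → V t ≤ A ^ n * (A ^ 2 * V r) → |m r - m t| ≤ K * V t ^ α by
    obtain ⟨n, hn⟩ := pow_unbounded_of_one_lt (V t / (A ^ 2 * V r)) hA
    exact this n t hrt ((div_le_iff₀ (by have := hV r le_rfl; positivity)).1 hn.le)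
  intro n
  induction n with
  | zero =>
    intro t hrt ht
    rw [pow_zero, one_mul] at ht
    exact (hshort r t le_rfl hrt ht).trans (by gcongr; exact hVα t hrt)
  | succ n ih =>
    intro t hrt ht
    by_cases hclose : V t ≤ A ^ 2 * V r
    · exact (hshort r t le_rfl hrt hclose).trans (by gcongr; exact hVα t hrt)
    obtain ⟨u, hru, hut, hVu, hVt⟩ := hmid t hrt (not_le.1 hclose)
    have hVt0 := hV t hrt
    have hA0 : 0 < A := one_pos.trans hA
    have hVu' : V u ≤ A ^ n * (A ^ 2 * V r) := by
      rw [pow_succ, mul_comm _ A, mul_assoc, ← div_le_iff₀' hA0] at ht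
      exact hVu.trans ht
    have hgeom : K * (V t / A) ^ α + A ^ 2 * L * V t ^ α = K * V t ^ α := by
      rw [Real.div_rpow hVt0.le hA0.le]
      simp only [K]
      field_simp [(by linarith : A ^ α - 1 ≠ 0)]
      ring
    calc |m r - m t| ≤ |m r - m u| + |m u - m t| := abs_sub_le _ _ _
      _ ≤ K * (V t / A) ^ α + A ^ 2 * L * V t ^ α := by
        gcongr
        · exact (ih u hru hVu').trans (by gcongr; exact (hV u hru).le)
        · exact hshort u t hru hut hVt
      _ = K * V t ^ α := hgeom

section

variable [MeasurableSpace X] {μ : Measure X}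

/-- Hölder's inequality for `∫ a * g` without measurability of `g`: on `{a ≠ 0}` the factor `g`
agrees with the measurable function `(a * g) / a`. -/
lemma enorm_integral_mul_le_eLpNorm_mul_eLpNorm {q q' : ℝ≥0∞} [q.HolderConjugate q']
    {a g : X → ℝ} (ha : AEStronglyMeasurable a μ)
    (hag : AEStronglyMeasurable (fun x => a x * g x) μ) :
    ‖∫ x, a x * g x ∂μ‖ₑ ≤ eLpNorm a q μ * eLpNorm g q' μ := by
  set G := fun x => a x * g x / a x
  have hG : AEStronglyMeasurable G μ :=
    (hag.aemeasurable.div ha.aemeasurable).aestronglyMeasurable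
  have haG : ∀ x, a x * G x = a x * g x := fun x => by
    by_cases h : a x = 0
    · simp [h]
    · simp only [G, mul_div_cancel_left₀ _ h]
  have hGg : ∀ x, ‖G x‖ ≤ ‖g x‖ := fun x => by
    by_cases h : a x = 0
    · simp [G, h]
    · simp only [G, mul_div_cancel_left₀ _ h, le_rfl]
  calc ‖∫ x, a x * g x ∂μ‖ₑ = ‖∫ x, a x * G x ∂μ‖ₑ := by simp only [haG]
    _ ≤ eLpNorm (fun x => a x * G x) 1 μ := by
      rw [eLpNorm_one_eq_lintegral_enorm]; exact enorm_integral_le_lintegral_enorm _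
    _ ≤ 1 * eLpNorm a q μ * eLpNorm G q' μ :=
      eLpNorm_le_eLpNorm_mul_eLpNorm'_of_norm ha hG (· * ·) 1
        (Eventually.of_forall fun x => by simp [norm_mul])
    _ ≤ eLpNorm a q μ * eLpNorm g q' μ := by
      rw [one_mul]; gcongr; exact eLpNorm_mono hGg

lemma enorm_integral_mul_le_of_support_subset {q q' : ℝ≥0∞} [q.HolderConjugate q']
    {a g : X → ℝ} {s : Set X} (hs : ∀ x, a x ≠ 0 → x ∈ s) (ha : AEStronglyMeasurable a μ)
    (hag : AEStronglyMeasurable (fun x => a x * g x) μ) :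
    ‖∫ x, a x * g x ∂μ‖ₑ ≤ eLpNorm a q μ * eLpNorm g q' (μ.restrict s) := by
  rw [← setIntegral_eq_integral_of_forall_compl_eq_zero fun x hx => by
    simp [not_imp_comm.1 (hs x) hx]]
  exact (enorm_integral_mul_le_eLpNorm_mul_eLpNorm ha.restrict hag.restrict).trans
    (by gcongr; exact Measure.restrict_le_self)

lemma measureReal_mul_setAverage_sub {f : X → ℝ} {s : Set X} (hs : μ s ≠ ∞)
    (hf : IntegrableOn f s μ) (c : ℝ) :
    μ.real s * ((⨍ y in s, f y ∂μ) - c) = ∫ y in s, (f y - c) ∂μ := by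
  rw [mul_sub, ← smul_eq_mul, measure_smul_setAverage _ hs,
    integral_sub hf (integrableOn_const hs), setIntegral_const, smul_eq_mul]

lemma enorm_setAverage_sub_mul_le {f : X → ℝ} {s t : Set X} (hst : s ⊆ t) (hs : μ s ≠ ∞)
    (hf : IntegrableOn f s μ) (c : ℝ) {q' : ℝ≥0∞} (hq' : 1 ≤ q') :
    ‖(⨍ y in s, f y ∂μ) - c‖ₑ * μ s ≤
      eLpNorm (fun y => f y - c) q' (μ.restrict t) * μ t ^ (1 - 1 / q'.toReal) := by
  have hmeas : AEStronglyMeasurable (fun y => f y - c) (μ.restrict s) :=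
    hf.aestronglyMeasurable.sub aestronglyMeasurable_const
  have hexp : 0 ≤ 1 - 1 / q'.toReal := by
    rcases eq_or_ne q' ∞ with rfl | hq'top
    · simp
    have : 1 ≤ q'.toReal := by
      simpa using ENNReal.toReal_mono hq'top hq'
    exact sub_nonneg.2 (div_le_one_of_le₀ this (by positivity))
  have hHolder := eLpNorm_le_eLpNorm_mul_rpow_measure_univ hq' hmeas
  rw [Measure.restrict_apply_univ, ENNReal.toReal_one, div_one] at hHolder
  calc ‖(⨍ y in s, f y ∂μ) - c‖ₑ * μ s = ‖∫ y in s, (f y - c) ∂μ‖ₑ := by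
        rw [← measureReal_mul_setAverage_sub hs hf, enorm_mul, mul_comm,
          Real.enorm_of_nonneg measureReal_nonneg, measureReal_def, ENNReal.ofReal_toReal hs]
    _ ≤ eLpNorm (fun y => f y - c) 1 (μ.restrict s) := by
      rw [eLpNorm_one_eq_lintegral_enorm]; exact enorm_integral_le_lintegral_enorm _
    _ ≤ _ := hHolder.trans (mul_le_mul' (eLpNorm_mono_measure _ (Measure.restrict_mono hst le_rfl))
        (ENNReal.rpow_le_rpow (measure_mono hst) hexp))

end

/-- `L` bounds the norm of `f` in the local Campanato space `c_{α,q',T}`. -/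
def CampanatoBound [MeasurableSpace X] (d : X → X → ℝ) (μ : Measure X) (α : ℝ) (q' : ℝ≥0∞)
    (T : ℝ) (f : X → ℝ) (L : ℝ) : Prop :=
  ∀ x r, 0 < r →
    eLpNorm (fun y => f y - mloc d μ T f x r) q' (μ.restrict (hball d x r))
      ≤ ENNReal.ofReal L * μ (hball d x r) ^ (α + 1 / q'.toReal)

namespace CampanatoBound

variable [MeasurableSpace X] {d : X → X → ℝ} {μ : Measure X} {A₀ A' γ α T L : ℝ}
  {q' : ℝ≥0∞} {f : X → ℝ}

lemma abs_mloc_sub_mloc_le (hf : CampanatoBound d μ α q' T f L) (hX : IsHomType d μ A₀ A' γ)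
    (hq' : 1 ≤ q') (hL : 0 ≤ L) (x : X) {s t : ℝ} (hs : 0 < s) (hst : s ≤ t) :
    |mloc d μ T f x s - mloc d μ T f x t|
      ≤ L * μ.real (hball d x t) ^ (α + 1) / μ.real (hball d x s) := by
  have ht := hs.trans_le hst
  have hVs := hX.measureReal_hball_pos x hs
  have hVt := hX.measureReal_hball_pos x ht
  have hRHS : 0 ≤ L * μ.real (hball d x t) ^ (α + 1) / μ.real (hball d x s) := by positivity
  by_cases hsT : s < T
  swap
  · simpa [mloc, hsT, (not_lt.2 (le_of_not_gt hsT |>.trans hst))] using hRHS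
  by_cases hint : IntegrableOn f (hball d x s) μ
  swap
  · have hnint : ¬IntegrableOn f (hball d x t) μ := fun h => hint (h.mono_set (hball_mono hst))
    simpa [mloc, hsT, setAverage_eq, integral_undef hint, integral_undef hnint] using hRHS
  have hμt := (hX.fin x t).ne
  have key := (enorm_setAverage_sub_mul_le (hball_mono hst) (hX.fin x s).ne hint
    (mloc d μ T f x t) hq').trans (mul_le_mul_left (hf x t ht) _)
  rw [mul_assoc, ← ENNReal.rpow_add _ _ (hX.pos x t ht).ne' hμt,
    show α + 1 / q'.toReal + (1 - 1 / q'.toReal) = α + 1 by ring] at key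
  have key' := ENNReal.toReal_mono
    (ENNReal.mul_ne_top ofReal_ne_top (ENNReal.rpow_ne_top_of_ne_zero (hX.pos x t ht).ne' hμt)) key
  rw [ENNReal.toReal_mul, ENNReal.toReal_mul, ENNReal.toReal_ofReal hL, ← ENNReal.toReal_rpow,
    toReal_enorm, ← measureReal_def, ← measureReal_def] at key'
  rw [le_div_iff₀ hVs, mloc, if_pos hsT]
  exact key'

lemma abs_mloc_le (hf : CampanatoBound d μ α q' T f L) (hX : IsHomType d μ A₀ A' γ)
    (hA' : 1 < A') (hα : 0 < α) (hq' : 1 ≤ q') (hL : 0 ≤ L) (x : X) {r : ℝ} (hr : 0 < r) :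
    |mloc d μ T f x r| ≤ A' ^ 2 * A' ^ α / (A' ^ α - 1) * L * μ.real (hball d x T) ^ α := by
  by_cases hrT : r < T
  swap
  · have := Real.one_lt_rpow hA' hα
    simp only [mloc, if_neg hrT, abs_zero]
    have := hX.A'_pos
    positivity
  set V := fun s => μ.real (hball d x s)
  have hmid : ∀ t, r ≤ t → A' ^ 2 * V r < V t →
      ∃ u, r ≤ u ∧ u ≤ t ∧ V u ≤ V t / A' ∧ V t ≤ A' ^ 2 * V u := by
    intro t hrt hlt
    have hA'0 := hX.A'_pos
    have hVr0 : 0 < V r := hX.measureReal_hball_pos x hr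
    have hVt0 : 0 < V t := hX.measureReal_hball_pos x (hr.trans_le hrt)
    have hVr : V r * A' ≤ A' ^ 2 * V r := by
      nlinarith [mul_pos (mul_pos hA'0 (sub_pos.2 hA')) hVr0]
    obtain ⟨u, hru, hut, hVu, hVtu⟩ := hX.exists_radius_measureReal_le_le_mul x hr hrt
      ((le_div_iff₀ hA'0).2 (hVr.trans hlt.le)) (div_lt_self hVt0 hA')
    refine ⟨u, hru, hut.le, hVu, ?_⟩
    rw [div_le_iff₀ hA'0] at hVtu
    nlinarith
  have := abs_sub_le_of_geometric_chain hA' hα hL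
    (fun t ht => hX.measureReal_hball_pos x (hr.trans_le ht))
    (fun s t hs hst => hf.abs_mloc_sub_mloc_le hX hq' hL x (hr.trans_le hs) hst) hmid hrT.le
  simpa [mloc, lt_irrefl] using this

end CampanatoBound

lemma one_div_toReal_add_one_div_toReal {q q' : ℝ≥0∞} (h : 1 / q + 1 / q' = 1) :
    1 / q.toReal + 1 / q'.toReal = 1 := by
  have hq : 1 / q ≠ ∞ := ne_top_of_le_ne_top one_ne_top (le_self_add.trans h.le)
  have hq' : 1 / q' ≠ ∞ := ne_top_of_le_ne_top one_ne_top (le_add_self.trans h.le)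
  have := congrArg ENNReal.toReal h
  rwa [ENNReal.toReal_add hq hq', ENNReal.toReal_div, ENNReal.toReal_div, ENNReal.toReal_one] at this

lemma CampanatoBound.abs_integral_mul_sub_mloc_le [MeasurableSpace X] {d : X → X → ℝ}
    {μ : Measure X} {A₀ A' γ p T L : ℝ} {q q' : ℝ≥0∞} [q.HolderConjugate q'] {f a : X → ℝ}
    (hf : CampanatoBound d μ (1 / p - 1) q' T f L) (hX : IsHomType d μ A₀ A' γ)
    (hqq' : 1 / q.toReal + 1 / q'.toReal = 1) (hL : 0 ≤ L) {x : X} {r : ℝ} (hr : 0 < r)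
    (hsupp : ∀ y, a y ≠ 0 → y ∈ hball d x r)
    (haq : eLpNorm a q μ ≤ μ (hball d x r) ^ (1 / q.toReal - 1 / p))
    (ha : AEStronglyMeasurable a μ)
    (haf : AEStronglyMeasurable (fun y => a y * (f y - mloc d μ T f x r)) μ) :
    |∫ y, a y * (f y - mloc d μ T f x r) ∂μ| ≤ L := by
  have key := (enorm_integral_mul_le_of_support_subset hsupp ha haf).trans
    (mul_le_mul' haq (hf x r hr))
  rw [mul_left_comm, ← ENNReal.rpow_add _ _ (hX.pos x r hr).ne' (hX.fin x r).ne,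
    show 1 / q.toReal - 1 / p + (1 / p - 1 + 1 / q'.toReal) = 0 by linarith,
    ENNReal.rpow_zero, mul_one, Real.enorm_eq_ofReal_abs, ENNReal.ofReal_le_ofReal_iff hL] at key
  exact key

lemma rpow_two_mul_rpow_one_div_sub_one_le {A p : ℝ} (hA : 1 ≤ A) (hp : 0 < p) (hp1 : p ≤ 1) :
    A ^ 2 * A ^ (1 / p - 1) ≤ A ^ (2 / p) := by
  rw [← Real.rpow_natCast, ← Real.rpow_add (by positivity)]
  refine Real.rpow_le_rpow_of_exponent_le hA ?_
  have := one_le_one_div hp hp1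
  rw [div_eq_mul_one_div 2 p]
  push_cast
  linarith

lemma CampanatoBound.abs_mloc_mul_le [MeasurableSpace X] {d : X → X → ℝ} {μ : Measure X}
    {A₀ A' γ p T L : ℝ} {q' : ℝ≥0∞} {f : X → ℝ} (hf : CampanatoBound d μ (1 / p - 1) q' T f L)
    (hX : IsHomType d μ A₀ A' γ) (hA' : 1 < A') (hp : 0 < p) (hp1 : p < 1) (hq' : 1 ≤ q')
    (hL : 0 ≤ L) (hT : 0 < T) {x : X} {r : ℝ} (hr : 0 < r) {I : ℝ}
    (hI : |I| ≤ μ.real (hball d x T) ^ (1 - 1 / p)) :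
    |mloc d μ T f x r * I| ≤ A' ^ ((2:ℝ)/p) / (A' ^ (1/p - 1) - 1) * L := by
  have hα : 0 < 1 / p - 1 := by rw [sub_pos, lt_one_div one_pos hp, div_one]; exact hp1
  have hm := hf.abs_mloc_le hX hA' hα hq' hL x hr
  have hC : A' ^ 2 * A' ^ (1 / p - 1) / (A' ^ (1 / p - 1) - 1)
      ≤ A' ^ ((2:ℝ)/p) / (A' ^ (1/p - 1) - 1) :=
    div_le_div_of_nonneg_right (rpow_two_mul_rpow_one_div_sub_one_le hA'.le hp hp1.le)
      (sub_nonneg.2 (Real.one_le_rpow hA'.le hα.le))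
  calc |mloc d μ T f x r * I|
      ≤ (A' ^ 2 * A' ^ (1 / p - 1) / (A' ^ (1 / p - 1) - 1) * L
          * μ.real (hball d x T) ^ (1 / p - 1)) * μ.real (hball d x T) ^ (1 - 1 / p) := by
        rw [abs_mul]; exact mul_le_mul hm hI (abs_nonneg _) ((abs_nonneg _).trans hm)
    _ = A' ^ 2 * A' ^ (1 / p - 1) / (A' ^ (1 / p - 1) - 1) * L := by
        rw [mul_assoc, ← Real.rpow_add (hX.measureReal_hball_pos x hT), sub_add_sub_cancel',
          sub_self, Real.rpow_zero, mul_one]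
    _ ≤ A' ^ ((2:ℝ)/p) / (A' ^ (1/p - 1) - 1) * L := mul_le_mul_of_nonneg_right hC hL

theorem stmt7_general [MeasurableSpace X] (d : X → X → ℝ) (μ : Measure X) (A₀ A' γ : ℝ)
    (hX : IsHomType d μ A₀ A' γ) (hA' : 1 < A')
    (p : ℝ) (hp : 0 < p) (hp1 : p < 1) (q q' : ℝ≥0∞)
    (hqq' : 1/q + 1/q' = 1) (T : ℝ) (hT : 0 < T)
    (a : X → ℝ) (ha : IsApproxAtom d μ p q T a)
    (f : X → ℝ) (L : ℝ) (hL : 0 ≤ L)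
    (hf : ∀ x r, 0 < r →
      eLpNorm (fun y => f y - mloc d μ T f x r) q' (μ.restrict (hball d x r))
        ≤ ENNReal.ofReal L * μ (hball d x r) ^ ((1/p - 1) + 1/q'.toReal))
    (haf : Integrable (fun x => a x * f x) μ) :
    |∫ x, a x * f x ∂μ| ≤ (1 + A' ^ ((2:ℝ)/p) / (A' ^ (1/p - 1) - 1)) * L := by
  obtain ⟨x, r, hr, hsupp, haq, ha, hmean⟩ := ha
  have hf : CampanatoBound d μ (1 / p - 1) q' T f L := hf
  have : q.HolderConjugate q' := ENNReal.holderConjugate_iff.2 (by simpa [one_div] using hqq')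
  set m := mloc d μ T f x r
  have hsplit : ∫ y, a y * f y ∂μ = ∫ y, a y * (f y - m) ∂μ + m * ∫ y, a y ∂μ := by
    simp only [mul_sub]
    rw [integral_sub haf (ha.mul_const m), integral_mul_const, mul_comm m]
    ring
  have hfm : AEStronglyMeasurable (fun y => a y * (f y - m)) μ := by
    refine (haf.sub (ha.mul_const m)).aestronglyMeasurable.congr (.of_forall fun y => ?_)
    simp [mul_sub]
  have h1 := hf.abs_integral_mul_sub_mloc_le hX (one_div_toReal_add_one_div_toReal hqq') hL hr
    hsupp haq ha.aestronglyMeasurable hfm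
  have h2 := hf.abs_mloc_mul_le hX hA' hp hp1 (ENNReal.HolderTriple.le q' q 1) hL hT hr hmean
  rw [hsplit, add_mul, one_mul]
  exact (abs_add_le _ _).trans (add_le_add h1 h2)

/-- Pairing of a `(p,q,T)`-approximate atom with a local Campanato function. -/
theorem stmt7 [MeasurableSpace X] (d : X → X → ℝ) (μ : Measure X) (A₀ A' γ : ℝ)
    (hX : IsHomType d μ A₀ A' γ) (hA' : 1 < A')
    (p : ℝ) (hp : 0 < p) (hp1 : p < 1) (q q' : ℝ≥0∞) (hq : 1 ≤ q)
    (hqq' : 1/q + 1/q' = 1) (T : ℝ) (hT : 0 < T)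
    (a : X → ℝ) (ha : IsApproxAtom d μ p q T a)
    (f : X → ℝ) (L : ℝ) (hL : 0 ≤ L)
    (hf : ∀ x r, 0 < r →
      eLpNorm (fun y => f y - mloc d μ T f x r) q' (μ.restrict (hball d x r))
        ≤ ENNReal.ofReal L * μ (hball d x r) ^ ((1/p - 1) + 1/q'.toReal))
    (haf : Integrable (fun x => a x * f x) μ) :
    |∫ x, a x * f x ∂μ| ≤ (1 + A' ^ ((2:ℝ)/p) / (A' ^ (1/p - 1) - 1)) * L :=
  stmt7_general d μ A₀ A' γ hX hA' p hp hp1 q q' hqq' T hT a ha f L hL hf haf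
end
end

section
/- Let (X,d,μ) be a space of homogeneous type with upper dimension γ, and let R be an inhomogeneous Calderón–Zygmund operator of order (ν,s) with kernel K. Let γ/(γ+min{ν,s}) < p < 1 and let a be a local (p,2)-atom supported in B = B(x_B,r_B) with r_B < T (so ∫ a dμ = 0). Then for each k ≥ 1, writing C_k = B(x_B, A₀2^{k+1}r_B) \ B(x_B, A₀2^k r_B), one has ‖Ra‖_{L²(C_k)} ≤ C |B(x_B, 2^{k+1}A₀ r_B)|^{1/2 − 1/p} · 2^{k(γ(1/p−1) − s)}, with C depending only on A₀, A′, γ, p, s. -/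
/-!
Off `B` the vanishing moment of `a` lets one replace `K x y` by `K x y - K x x_B`. On the annulus
`C_k` the Hölder regularity bounds this by `2^{-ks} / V(x, d(x, x_B))`, and doubling compares
`V(x, d(x, x_B))` with `V := μ(B(x_B, 2^{k+1} A₀ r_B))`, so `|Ra| ≲ 2^{-ks} ‖a‖₁ / V` on `C_k`.
By Cauchy–Schwarz `‖a‖₁ ≤ |B|^{1 - 1/p}`; since `1 - 1/p < 0`, doubling turns this into
`‖a‖₁ ≲ 2^{kγ(1/p - 1)} V^{1 - 1/p}`. Integrating the square over `C_k ⊆ B(x_B, 2^{k+1} A₀ r_B)`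
gives the factor `V^{1/2}`.
-/


open MeasureTheory ENNReal Filter Topology

noncomputable section

variable {X : Type*}

open Function

section Lebesgue

variable {α : Type*} [MeasurableSpace α] {μ : Measure α}

lemma eLpNorm_one_le_eLpNorm_two_mul_of_support_subset {f : α → ℝ} {S : Set α}
    (hf : AEStronglyMeasurable f μ) (hS : support f ⊆ S) :
    eLpNorm f 1 μ ≤ eLpNorm f 2 μ * μ S ^ (1 / 2 : ℝ) := by
  rw [← eLpNorm_restrict_eq_of_support_subset hS,
    ← eLpNorm_restrict_eq_of_support_subset (p := 2) hS]
  calc eLpNorm f 1 (μ.restrict S)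
      ≤ eLpNorm f 2 (μ.restrict S) *
          μ.restrict S Set.univ ^ (1 / (1 : ℝ≥0∞).toReal - 1 / (2 : ℝ≥0∞).toReal) :=
        eLpNorm_le_eLpNorm_mul_rpow_measure_univ one_le_two hf.restrict
    _ = _ := by rw [Measure.restrict_apply_univ]; norm_num

lemma integral_abs_le_of_eLpNorm_two_le {f : α → ℝ} {S : Set α} {p : ℝ} (hf : Integrable f μ)
    (hS : support f ⊆ S) (hS₀ : μ S ≠ 0) (hS_top : μ S ≠ ∞)
    (h2 : eLpNorm f 2 μ ≤ μ S ^ (1 / 2 - 1 / p)) :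
    ∫ x, |f x| ∂μ ≤ (μ S).toReal ^ (1 - 1 / p) := by
  have h1 : eLpNorm f 1 μ ≤ μ S ^ (1 - 1 / p) := calc
    eLpNorm f 1 μ ≤ eLpNorm f 2 μ * μ S ^ (1 / 2 : ℝ) :=
        eLpNorm_one_le_eLpNorm_two_mul_of_support_subset hf.1 hS
    _ ≤ μ S ^ (1 / 2 - 1 / p) * μ S ^ (1 / 2 : ℝ) := by gcongr
    _ = μ S ^ (1 - 1 / p) := by rw [← ENNReal.rpow_add _ _ hS₀ hS_top]; ring_nf
  have hnorm : ∫ x, |f x| ∂μ = (eLpNorm f 1 μ).toReal := by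
    rw [toReal_eLpNorm hf.1, lpNorm_one_eq_integral_norm hf.1]
    simp only [Real.norm_eq_abs]
  rw [hnorm, ENNReal.toReal_rpow]
  exact ENNReal.toReal_mono (rpow_ne_top_of_ne_zero hS₀ hS_top) h1

lemma abs_integral_mul_le_of_integral_eq_zero {g a : α → ℝ} {c M : ℝ} (ha : Integrable a μ)
    (h₀ : ∫ y, a y ∂μ = 0) (hM : 0 ≤ M) (hg : ∀ y, a y ≠ 0 → |g y - c| ≤ M) :
    |∫ y, g y * a y ∂μ| ≤ M * ∫ y, |a y| ∂μ := by
  by_cases hga : Integrable (fun y => g y * a y) μ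
  · have hcancel : ∫ y, g y * a y ∂μ = ∫ y, (g y - c) * a y ∂μ := by
      simp_rw [sub_mul]
      rw [integral_sub hga (ha.const_mul c), integral_const_mul, h₀, mul_zero, sub_zero]
    rw [hcancel, ← integral_const_mul, ← Real.norm_eq_abs]
    refine norm_integral_le_of_norm_le (ha.abs.const_mul M) (ae_of_all _ fun y => ?_)
    rcases eq_or_ne (a y) 0 with hy | hy
    · simp [hy]
    · rw [Real.norm_eq_abs, abs_mul]
      exact mul_le_mul_of_nonneg_right (hg y hy) (abs_nonneg _)
  · rw [integral_undef hga, abs_zero]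
    exact mul_nonneg hM (integral_nonneg fun _ => abs_nonneg _)

lemma eLpNorm_two_restrict_le_of_abs_le {f : α → ℝ} {S T : Set α} {M : ℝ}
    (hS : MeasurableSet S) (hST : S ⊆ T) (hT : μ T ≠ ∞) (hf : ∀ x ∈ S, |f x| ≤ M) :
    eLpNorm f 2 (μ.restrict S) ≤ ENNReal.ofReal ((μ T).toReal ^ (1 / 2 : ℝ) * M) := by
  calc eLpNorm f 2 (μ.restrict S)
      ≤ μ.restrict S Set.univ ^ (2 : ℝ≥0∞).toReal⁻¹ * ENNReal.ofReal M :=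
        eLpNorm_le_of_ae_bound (ae_restrict_of_forall_mem hS hf)
    _ ≤ μ T ^ (1 / 2 : ℝ) * ENNReal.ofReal M := by
        rw [Measure.restrict_apply_univ, ENNReal.toReal_ofNat, one_div]
        gcongr
    _ = _ := by
        rw [ENNReal.ofReal_mul (by positivity), ← ENNReal.ofReal_rpow_of_nonneg toReal_nonneg
          (by norm_num), ofReal_toReal hT]

end Lebesgue

lemma Real.rpow_le_mul_rpow_of_le_mul {u v c e : ℝ} (hu : 0 < u) (hv : 0 < v) (h : v ≤ c * u)
    (he : e ≤ 0) : u ^ e ≤ c ^ (-e) * v ^ e := by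
  have hc : 0 < c := pos_of_mul_pos_left (hv.trans_le h) hu.le
  calc u ^ e = c ^ (-e) * (c * u) ^ e := by
        rw [Real.mul_rpow hc.le hu.le, ← mul_assoc, ← Real.rpow_add hc, neg_add_cancel,
          Real.rpow_zero, one_mul]
    _ ≤ c ^ (-e) * v ^ e :=
        mul_le_mul_of_nonneg_left (Real.rpow_le_rpow_of_nonpos hv h he) (by positivity)

lemma inv_mul_two_pow_rpow_le {A₀ s : ℝ} (hA₀ : 1 ≤ A₀) (hs : 0 ≤ s) (k : ℕ) :
    (A₀ * 2 ^ k)⁻¹ ^ s ≤ (2 : ℝ) ^ (-(k * s)) := by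
  calc (A₀ * 2 ^ k)⁻¹ ^ s ≤ ((2 : ℝ) ^ k)⁻¹ ^ s := by
        gcongr
        exact le_mul_of_one_le_left (by positivity) hA₀
    _ = (2 : ℝ) ^ (-(k * s)) := by
        rw [Real.inv_rpow (by positivity), ← Real.rpow_natCast_mul zero_le_two, Real.rpow_neg
          zero_le_two]

lemma two_pow_succ_mul_rpow {A₀ : ℝ} (hA₀ : 0 ≤ A₀) (k : ℕ) (γ : ℝ) :
    ((2 : ℝ) ^ (k + 1) * A₀) ^ γ = (2 : ℝ) ^ (k * γ) * (2 * A₀) ^ γ := by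
  rw [pow_succ, mul_assoc, Real.mul_rpow (by positivity) (by positivity),
    Real.rpow_natCast_mul zero_le_two]

namespace IsHomType

variable [MeasurableSpace X] {d : X → X → ℝ} {μ : Measure X} {A₀ A' γ : ℝ}

lemma A0_pos (hX : IsHomType d μ A₀ A' γ) : 0 < A₀ := one_pos.trans_le hX.A0_ge

lemma toReal_measure_hball_pos (hX : IsHomType d μ A₀ A' γ) {x : X} {r : ℝ} (hr : 0 < r) :
    0 < (μ (hball d x r)).toReal :=
  ENNReal.toReal_pos (hX.pos x r hr).ne' (hX.fin x r).ne

lemma toReal_measure_hball_mul_le (hX : IsHomType d μ A₀ A' γ) (x : X) (r : ℝ) {lam : ℝ}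
    (hlam : 1 ≤ lam) :
    (μ (hball d x (lam * r))).toReal ≤ A' * lam ^ γ * (μ (hball d x r)).toReal := by
  have h := ENNReal.toReal_mono (ENNReal.mul_ne_top ENNReal.ofReal_ne_top (hX.fin x r).ne)
    (hX.doubling x r lam hlam)
  rwa [ENNReal.toReal_mul, ENNReal.toReal_ofReal
    (mul_nonneg hX.A'_pos.le (Real.rpow_nonneg (by linarith) _))] at h

lemma hball_subset_hball (hX : IsHomType d μ A₀ A' γ) (x z : X) (R : ℝ) :
    hball d z R ⊆ hball d x (A₀ * (d x z + R)) := fun y (hy : d z y < R) =>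
  calc d x y ≤ A₀ * (d x z + d z y) := hX.tri x y z
    _ < A₀ * (d x z + R) := mul_lt_mul_of_pos_left (by linarith) hX.A0_pos

lemma toReal_measure_hball_le_of_le_two_mul (hX : IsHomType d μ A₀ A' γ) {x z : X} {R : ℝ}
    (hR : R ≤ 2 * d x z) :
    (μ (hball d z R)).toReal ≤ A' * (3 * A₀) ^ γ * (μ (hball d x (d x z))).toReal := by
  have hsub : hball d z R ⊆ hball d x (3 * A₀ * d x z) :=
    (hX.hball_subset_hball x z R).trans fun y (hy : d x y < A₀ * (d x z + R)) =>
      show d x y < 3 * A₀ * d x z by nlinarith [hX.A0_pos]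
  exact (ENNReal.toReal_mono (hX.fin _ _).ne (measure_mono hsub)).trans
    (hX.toReal_measure_hball_mul_le x (d x z) (by linarith [hX.A0_ge]))

lemma abs_kernel_sub_le (hX : IsHomType d μ A₀ A' γ) {K : X → X → ℝ} {C₂ s : ℝ}
    (hC₂ : 0 ≤ C₂) (hs : 0 ≤ s)
    (hKreg : ∀ x y z, 2 * A₀ * d y z ≤ d x z → x ≠ z →
      |K x y - K x z| ≤ C₂ * (d y z / d x z) ^ s * (μ (hball d x (d x z))).toReal⁻¹)
    {x y z : X} {r t R : ℝ} (hr : 0 < r) (ht : 2 * A₀ ≤ t) (hy : d z y < r)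
    (hx : t * r ≤ d x z) (hR₀ : 0 < R) (hR : R ≤ 2 * d x z) :
    |K x y - K x z| ≤ C₂ * t⁻¹ ^ s * (A' * (3 * A₀) ^ γ / (μ (hball d z R)).toReal) := by
  have ht₀ : 0 < t := by linarith [hX.A0_pos]
  have hxz : 0 < d x z := (mul_pos ht₀ hr).trans_le hx
  have hyz : d y z < r := by rwa [hX.symm]
  have hratio : d y z / d x z ≤ t⁻¹ := by
    rw [div_le_iff₀ hxz, inv_mul_eq_div, le_div_iff₀ ht₀]
    nlinarith
  have hvol : (μ (hball d x (d x z))).toReal⁻¹ ≤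
      A' * (3 * A₀) ^ γ / (μ (hball d z R)).toReal := by
    rw [le_div_iff₀ (hX.toReal_measure_hball_pos hR₀), inv_mul_le_iff₀
      (hX.toReal_measure_hball_pos hxz), mul_comm]
    exact hX.toReal_measure_hball_le_of_le_two_mul hR
  calc |K x y - K x z| ≤ C₂ * (d y z / d x z) ^ s * (μ (hball d x (d x z))).toReal⁻¹ :=
        hKreg x y z (by nlinarith [hX.A0_pos, hX.nonneg y z])
          fun h => hxz.ne' ((hX.eq_zero x z).2 h)
    _ ≤ _ := by
        gcongr
        exact div_nonneg (hX.nonneg y z) hxz.le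

lemma abs_apply_le_of_integral_eq_zero (hX : IsHomType d μ A₀ A' γ) {K : X → X → ℝ} {C₂ s : ℝ}
    (hC₂ : 0 ≤ C₂) (hs : 0 ≤ s)
    (hKreg : ∀ x y z, 2 * A₀ * d y z ≤ d x z → x ≠ z →
      |K x y - K x z| ≤ C₂ * (d y z / d x z) ^ s * (μ (hball d x (d x z))).toReal⁻¹)
    {a Ra : X → ℝ} {x_B : X} {r_B t R : ℝ} (hr : 0 < r_B) (ht : 2 * A₀ ≤ t) (hR₀ : 0 < R)
    (hR : R ≤ 2 * t * r_B) (hsupp : ∀ x, a x ≠ 0 → x ∈ hball d x_B r_B) (ha : Integrable a μ)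
    (hmean : ∫ x, a x ∂μ = 0) (hRa : ∀ x, x ∉ hball d x_B r_B → Ra x = ∫ y, K x y * a y ∂μ)
    {x : X} (hx : t * r_B ≤ d x_B x) :
    |Ra x| ≤ C₂ * t⁻¹ ^ s * (A' * (3 * A₀) ^ γ / (μ (hball d x_B R)).toReal) *
      ∫ y, |a y| ∂μ := by
  have ht₀ : 0 < t := by linarith [hX.A0_pos]
  have hxB : x ∉ hball d x_B r_B := fun (h : d x_B x < r_B) => by nlinarith [hX.A0_ge]
  have hx' : t * r_B ≤ d x x_B := by rwa [hX.symm]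
  rw [hRa x hxB]
  refine abs_integral_mul_le_of_integral_eq_zero ha hmean ?_ fun y hy =>
    hX.abs_kernel_sub_le hC₂ hs hKreg hr ht (hsupp y hy) hx' hR₀ (by linarith)
  exact mul_nonneg (mul_nonneg hC₂ (Real.rpow_nonneg (inv_nonneg.2 ht₀.le) _))
    (div_nonneg (mul_nonneg hX.A'_pos.le (Real.rpow_nonneg (by linarith [hX.A0_pos]) _))
      toReal_nonneg)

lemma integral_abs_le_of_support_subset_hball (hX : IsHomType d μ A₀ A' γ) {p : ℝ} (hp₀ : 0 < p)
    (hp1 : p ≤ 1) {a : X → ℝ} {x_B : X} {r_B : ℝ} (k : ℕ) (hr : 0 < r_B)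
    (hsupp : ∀ x, a x ≠ 0 → x ∈ hball d x_B r_B) (ha : Integrable a μ)
    (ha2 : eLpNorm a 2 μ ≤ μ (hball d x_B r_B) ^ ((1 : ℝ) / 2 - 1 / p)) :
    ∫ y, |a y| ∂μ ≤ (A' * (2 * A₀) ^ γ) ^ (1 / p - 1) * 2 ^ (k * γ * (1 / p - 1)) *
      (μ (hball d x_B (2 ^ (k + 1) * A₀ * r_B))).toReal ^ (1 - 1 / p) := by
  have he : 1 - 1 / p ≤ 0 := by rw [sub_nonpos, le_div_iff₀ hp₀]; linarith
  have hA₀ := hX.A0_pos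
  calc ∫ y, |a y| ∂μ ≤ (μ (hball d x_B r_B)).toReal ^ (1 - 1 / p) :=
        integral_abs_le_of_eLpNorm_two_le ha hsupp (hX.pos _ _ hr).ne' (hX.fin _ _).ne ha2
    _ ≤ (A' * (2 ^ (k + 1) * A₀) ^ γ) ^ (-(1 - 1 / p)) *
          (μ (hball d x_B (2 ^ (k + 1) * A₀ * r_B))).toReal ^ (1 - 1 / p) :=
        Real.rpow_le_mul_rpow_of_le_mul (hX.toReal_measure_hball_pos hr)
          (hX.toReal_measure_hball_pos (by positivity))
          (hX.toReal_measure_hball_mul_le x_B r_B (one_le_mul_of_one_le_of_one_le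
            (one_le_pow₀ one_le_two) hX.A0_ge)) he
    _ = _ := by
        rw [two_pow_succ_mul_rpow hA₀.le, neg_sub, mul_left_comm, Real.mul_rpow
          (by positivity) (mul_pos hX.A'_pos (by positivity)).le, ← Real.rpow_mul zero_le_two,
          mul_comm (2 ^ _)]

lemma abs_apply_le_of_notMem_hball (hX : IsHomType d μ A₀ A' γ) {K : X → X → ℝ} {C₂ s : ℝ}
    (hC₂ : 0 ≤ C₂) (hs : 0 ≤ s)
    (hKreg : ∀ x y z, 2 * A₀ * d y z ≤ d x z → x ≠ z →
      |K x y - K x z| ≤ C₂ * (d y z / d x z) ^ s * (μ (hball d x (d x z))).toReal⁻¹)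
    {p : ℝ} (hp₀ : 0 < p) (hp1 : p ≤ 1) {a Ra : X → ℝ} {x_B : X} {r_B : ℝ} {k : ℕ} (hk : 1 ≤ k)
    (hr : 0 < r_B) (hsupp : ∀ x, a x ≠ 0 → x ∈ hball d x_B r_B)
    (ha2 : eLpNorm a 2 μ ≤ μ (hball d x_B r_B) ^ ((1 : ℝ) / 2 - 1 / p)) (ha : Integrable a μ)
    (hmean : ∫ x, a x ∂μ = 0) (hRa : ∀ x, x ∉ hball d x_B r_B → Ra x = ∫ y, K x y * a y ∂μ)
    {x : X} (hx : x ∉ hball d x_B (A₀ * 2 ^ k * r_B)) :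
    |Ra x| ≤ C₂ * (A' * (3 * A₀) ^ γ) * (A' * (2 * A₀) ^ γ) ^ (1 / p - 1) *
      2 ^ (k * (γ * (1 / p - 1) - s)) *
      (μ (hball d x_B (2 ^ (k + 1) * A₀ * r_B))).toReal ^ (1 - 1 / p) /
      (μ (hball d x_B (2 ^ (k + 1) * A₀ * r_B))).toReal := by
  have hA₀ := hX.A0_pos
  set V := (μ (hball d x_B (2 ^ (k + 1) * A₀ * r_B))).toReal
  have hV : 0 < V := hX.toReal_measure_hball_pos (by positivity)
  have ht : 2 * A₀ ≤ A₀ * 2 ^ k := by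
    rw [mul_comm]; gcongr; exact le_self_pow₀ one_le_two (by omega)
  have hE : (2 : ℝ) ^ (-(k * s)) * 2 ^ (k * γ * (1 / p - 1)) =
      2 ^ (k * (γ * (1 / p - 1) - s)) := by
    rw [← Real.rpow_add two_pos]; ring_nf
  calc |Ra x| ≤ C₂ * (A₀ * 2 ^ k)⁻¹ ^ s * (A' * (3 * A₀) ^ γ / V) * ∫ y, |a y| ∂μ :=
        hX.abs_apply_le_of_integral_eq_zero hC₂ hs hKreg hr ht (by positivity)
          (le_of_eq (by ring)) hsupp ha hmean hRa (not_lt.1 hx)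
    _ ≤ C₂ * 2 ^ (-(k * s)) * (A' * (3 * A₀) ^ γ / V) *
          ((A' * (2 * A₀) ^ γ) ^ (1 / p - 1) * 2 ^ (k * γ * (1 / p - 1)) * V ^ (1 - 1 / p)) := by
        have hG₃V : 0 ≤ A' * (3 * A₀) ^ γ / V :=
          div_nonneg (mul_nonneg hX.A'_pos.le (by positivity)) hV.le
        gcongr
        · exact inv_mul_two_pow_rpow_le hX.A0_ge hs k
        · exact hX.integral_abs_le_of_support_subset_hball hp₀ hp1 k hr hsupp ha ha2
    _ = _ := by rw [← hE]; ring

end IsHomType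

theorem stmt15_general [MeasurableSpace X] (d : X → X → ℝ) (μ : Measure X) (A₀ A' γ : ℝ)
    (hX : IsHomType d μ A₀ A' γ) (ν s : ℝ) (hν : 0 < ν) (hs : 0 < s)
    (p : ℝ) (hp : γ / (γ + min ν s) < p) (hp1 : p < 1) (T : ℝ)
    (K : X → X → ℝ) (C₂ : ℝ) (hC₂ : 0 < C₂)
    (hKreg : ∀ x y z, 2 * A₀ * d y z ≤ d x z → x ≠ z →
      |K x y - K x z| ≤ C₂ * (d y z / d x z) ^ s * (μ (hball d x (d x z))).toReal⁻¹) :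
    ∃ C : ℝ, 0 < C ∧
      ∀ (a Ra : X → ℝ) (x_B : X) (r_B : ℝ) (k : ℕ), 1 ≤ k → 0 < r_B → r_B < T →
        (∀ x, a x ≠ 0 → x ∈ hball d x_B r_B) →
        eLpNorm a 2 μ ≤ μ (hball d x_B r_B) ^ ((1:ℝ)/2 - 1/p) →
        Integrable a μ → (∫ x, a x ∂μ) = 0 →
        (∀ x, x ∉ hball d x_B r_B → Ra x = ∫ y, K x y * a y ∂μ) →
        eLpNorm Ra 2 (μ.restrict
            (hball d x_B (A₀ * 2^(k+1) * r_B) \ hball d x_B (A₀ * 2^k * r_B)))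
          ≤ ENNReal.ofReal C * μ (hball d x_B (2^(k+1) * A₀ * r_B)) ^ ((1:ℝ)/2 - 1/p) *
              ENNReal.ofReal (2 ^ ((k:ℝ) * (γ * (1/p - 1) - s))) := by
  have hA₀ := hX.A0_pos
  have hp₀ : 0 < p := (div_pos hX.gamma_pos (by linarith [lt_min hν hs, hX.gamma_pos])).trans hp
  set C := C₂ * (A' * (3 * A₀) ^ γ) * (A' * (2 * A₀) ^ γ) ^ (1 / p - 1)
  have hC : 0 < C := mul_pos (mul_pos hC₂ (mul_pos hX.A'_pos (by positivity)))
    (Real.rpow_pos_of_pos (mul_pos hX.A'_pos (by positivity)) _)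
  refine ⟨C, hC, ?_⟩
  intro a Ra x_B r_B k hk hr _ hsupp ha2 ha hmean hRa
  set R := 2 ^ (k + 1) * A₀ * r_B
  set V := (μ (hball d x_B R)).toReal
  have hV : 0 < V := hX.toReal_measure_hball_pos (by positivity)
  have hVexp : V ^ (1 / 2 : ℝ) * V ^ (1 - 1 / p) / V = V ^ (1 / 2 - 1 / p) := by
    rw [← Real.rpow_add hV, ← Real.rpow_sub_one hV.ne']; ring_nf
  rw [show A₀ * 2 ^ (k + 1) * r_B = R by ring]
  calc eLpNorm Ra 2 (μ.restrict (hball d x_B R \ hball d x_B (A₀ * 2 ^ k * r_B)))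
      ≤ ENNReal.ofReal (V ^ (1 / 2 : ℝ) *
          (C * 2 ^ (k * (γ * (1 / p - 1) - s)) * V ^ (1 - 1 / p) / V)) :=
        eLpNorm_two_restrict_le_of_abs_le ((hX.meas _ _).diff (hX.meas _ _)) Set.sdiff_subset
          (hX.fin _ _).ne fun x hx => hX.abs_apply_le_of_notMem_hball hC₂.le hs.le hKreg hp₀
            hp1.le hk hr hsupp ha2 ha hmean hRa hx.2
    _ = ENNReal.ofReal (C * V ^ (1 / 2 - 1 / p) * 2 ^ (k * (γ * (1 / p - 1) - s))) := by
        rw [← hVexp]; ring_nf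
    _ = _ := by
        rw [ENNReal.ofReal_mul (by positivity), ENNReal.ofReal_mul hC.le,
          ← ENNReal.ofReal_rpow_of_pos hV, ofReal_toReal (hX.fin _ _).ne]

/-- Annular `L²` decay estimate for the image of a local `(p,2)`-atom with
vanishing moment under an inhomogeneous Calderón–Zygmund operator. -/
theorem stmt15 [MeasurableSpace X] (d : X → X → ℝ) (μ : Measure X) (A₀ A' γ : ℝ)
    (hX : IsHomType d μ A₀ A' γ) (ν s : ℝ) (hν : 0 < ν) (hs : 0 < s)
    (p : ℝ) (hp : γ / (γ + min ν s) < p) (hp1 : p < 1) (T : ℝ) (hT : 0 < T)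
    (K : X → X → ℝ) (C₂ : ℝ) (hC₂ : 0 < C₂)
    (hKreg : ∀ x y z, 2 * A₀ * d y z ≤ d x z → x ≠ z →
      |K x y - K x z| ≤ C₂ * (d y z / d x z) ^ s * (μ (hball d x (d x z))).toReal⁻¹) :
    ∃ C : ℝ, 0 < C ∧
      ∀ (a Ra : X → ℝ) (x_B : X) (r_B : ℝ) (k : ℕ), 1 ≤ k → 0 < r_B → r_B < T →
        (∀ x, a x ≠ 0 → x ∈ hball d x_B r_B) →
        eLpNorm a 2 μ ≤ μ (hball d x_B r_B) ^ ((1:ℝ)/2 - 1/p) →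
        Integrable a μ → (∫ x, a x ∂μ) = 0 →
        (∀ x, x ∉ hball d x_B r_B → Ra x = ∫ y, K x y * a y ∂μ) →
        eLpNorm Ra 2 (μ.restrict
            (hball d x_B (A₀ * 2^(k+1) * r_B) \ hball d x_B (A₀ * 2^k * r_B)))
          ≤ ENNReal.ofReal C * μ (hball d x_B (2^(k+1) * A₀ * r_B)) ^ ((1:ℝ)/2 - 1/p) *
              ENNReal.ofReal (2 ^ ((k:ℝ) * (γ * (1/p - 1) - s))) :=
  stmt15_general d μ A₀ A' γ hX ν s hν hs p hp hp1 T K C₂ hC₂ hKreg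
end
end
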